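/- arXiv:1906.08537 — 4 statements merged into one kernel-verified Lean document; each statement's English description precedes it below -/
import Mathlib

section
/- For the sphere S_ρ ⊂ ℝ³ of radius ρ, any point o ∈ S_ρ, and any R > 0, the area of S_ρ ∩ B_R(o) satisfies Area(S_ρ ∩ B_R(o)) ≥ πR²·e^{−2R/ρ}. -/
/-!
Orthogonal projection onto the plane `(ℝ ∙ o)ᗮ` is 1-Lipschitz, so it does not increase `μH[2]`,
and the (unnormalized) `μH[2]` dominates Lebesgue measure on a plane. The projection of the cap
`S_ρ ∩ B_R(o)` contains a disk of radius `r`: a point of the hemisphere around `o` lying over a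
vector of norm `x` is at squared distance `2ρ(ρ - √(ρ² - x²))` from `o`. One may take `r = ρ` when
`R² ≥ 2ρ²` and `r² = R² - R⁴/(4ρ²)` otherwise; in both cases `r² ≥ R² e^{-2R/ρ}` follows from
`1 + x ≤ eˣ` and `1 + x + x²/2 ≤ eˣ`.
-/

open MeasureTheory

noncomputable section

local notation "E" => EuclideanSpace ℝ (Fin 3)

open Module Metric Real Submodule RealInnerProductSpace

theorem EuclideanSpace.volume_le_hausdorffMeasure {ι : Type*} [Fintype ι]
    (s : Set (EuclideanSpace ℝ ι)) : volume s ≤ μH[Fintype.card ι] s := by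
  let e := (MeasurableEquiv.toLp 2 (ι → ℝ)).symm
  calc volume s = μH[Fintype.card ι] (e '' s) := by
        rw [hausdorffMeasure_pi_real, e.image_eq_preimage_symm,
          (EuclideanSpace.volume_preserving_symm_measurableEquiv_toLp ι).symm.measure_preimage_equiv]
    _ ≤ 1 ^ (Fintype.card ι : ℝ) * μH[Fintype.card ι] s :=
        (PiLp.lipschitzWith_ofLp 2 fun _ : ι => ℝ).hausdorffMeasure_image_le (Nat.cast_nonneg _) s
    _ = μH[Fintype.card ι] s := by rw [ENNReal.one_rpow, one_mul]

theorem InnerProductSpace.volume_le_hausdorffMeasure {V : Type*} [NormedAddCommGroup V]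
    [InnerProductSpace ℝ V] [FiniteDimensional ℝ V] [MeasurableSpace V] [BorelSpace V]
    (s : Set V) : volume s ≤ μH[finrank ℝ V] s := by
  let b := stdOrthonormalBasis ℝ V
  calc volume s = volume (b.repr '' s) := by
        rw [← b.measurePreserving_measurableEquiv.symm.measure_preimage_equiv,
          ← b.measurableEquiv.image_eq_preimage_symm]
        rfl
    _ ≤ μH[finrank ℝ V] (b.repr '' s) := by
        simpa using EuclideanSpace.volume_le_hausdorffMeasure (b.repr '' s)
    _ = μH[finrank ℝ V] s := b.repr.isometry.hausdorffMeasure_image (Or.inl (Nat.cast_nonneg _)) s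

section Hemisphere

variable {F : Type*} [NormedAddCommGroup F] [InnerProductSpace ℝ F] {o : F} {ρ R r : ℝ}

theorem norm_add_smul_sq_of_mem_orthogonal {v : F} (hv : v ∈ (ℝ ∙ o)ᗮ) (c : ℝ) :
    ‖v + c • o‖ ^ 2 = ‖v‖ ^ 2 + c ^ 2 * ‖o‖ ^ 2 := by
  have hvo : ⟪v, c • o⟫ = 0 :=
    inner_left_of_mem_orthogonal (smul_mem _ c (mem_span_singleton_self o)) hv
  rw [sq, sq, norm_add_sq_eq_norm_sq_add_norm_sq_real hvo, norm_smul, Real.norm_eq_abs,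
    mul_mul_mul_comm, abs_mul_abs_self]
  ring

theorem ball_subset_orthogonalProjectionOnto_image_sphere_inter_ball (ho : ‖o‖ = ρ)
    (hR : 0 ≤ R) (hrρ : r ≤ ρ) (hcap : 2 * ρ * (ρ - √(ρ ^ 2 - r ^ 2)) ≤ R ^ 2) :
    ball (0 : (ℝ ∙ o)ᗮ) r ⊆ (ℝ ∙ o)ᗮ.orthogonalProjectionOnto '' (sphere 0 ρ ∩ ball o R) := by
  intro v hv
  replace hv : ‖(v : F)‖ < r := by simpa using hv
  have hρ : 0 < ρ := (norm_nonneg _).trans_lt (hv.trans_le hrρ)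
  set s := √(ρ ^ 2 - ‖(v : F)‖ ^ 2)
  have hs : s ^ 2 = ρ ^ 2 - ‖(v : F)‖ ^ 2 := sq_sqrt (by nlinarith [norm_nonneg (v : F)])
  have hs_gt : √(ρ ^ 2 - r ^ 2) < s :=
    sqrt_lt_sqrt (by nlinarith [norm_nonneg (v : F)]) (by nlinarith [norm_nonneg (v : F)])
  -- the point of the hemisphere around `o` lying over `v`
  set p : F := v + (s / ρ) • o
  have hp : ‖p‖ ^ 2 = ρ ^ 2 := by
    rw [norm_add_smul_sq_of_mem_orthogonal v.2, ho, div_pow, div_mul_cancel₀ _ (by positivity),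
      hs]
    ring
  have hpo : ‖p - o‖ ^ 2 = 2 * ρ * (ρ - s) := by
    rw [show p - o = v + (s / ρ - 1) • o by module, norm_add_smul_sq_of_mem_orthogonal v.2, ho]
    field_simp
    linear_combination hs
  refine ⟨p, ⟨?_, ?_⟩, ?_⟩
  · rw [mem_sphere_zero_iff_norm]
    exact (sq_eq_sq₀ (norm_nonneg _) hρ.le).1 hp
  · rw [mem_ball_iff_norm]
    refine lt_of_pow_lt_pow_left₀ 2 hR ?_
    rw [hpo]
    nlinarith
  · simp [p, orthogonalProjectionOnto_orthogonalComplement_singleton_eq_zero]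

end Hemisphere

section Area

variable {F : Type*} [NormedAddCommGroup F] [InnerProductSpace ℝ F] [FiniteDimensional ℝ F]
  [MeasurableSpace F] [BorelSpace F] {o : F} {ρ R r : ℝ}

theorem volume_ball_le_hausdorffMeasure_sphere_inter_ball (ho : ‖o‖ = ρ) (hR : 0 ≤ R)
    (hrρ : r ≤ ρ) (hcap : 2 * ρ * (ρ - √(ρ ^ 2 - r ^ 2)) ≤ R ^ 2) :
    volume (ball (0 : (ℝ ∙ o)ᗮ) r) ≤ μH[finrank ℝ (ℝ ∙ o)ᗮ] (sphere (0 : F) ρ ∩ ball o R) :=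
  calc volume (ball (0 : (ℝ ∙ o)ᗮ) r)
      ≤ μH[finrank ℝ (ℝ ∙ o)ᗮ] (ball (0 : (ℝ ∙ o)ᗮ) r) :=
        InnerProductSpace.volume_le_hausdorffMeasure _
    _ ≤ μH[finrank ℝ (ℝ ∙ o)ᗮ]
          ((ℝ ∙ o)ᗮ.orthogonalProjectionOnto '' (sphere (0 : F) ρ ∩ ball o R)) :=
        measure_mono (ball_subset_orthogonalProjectionOnto_image_sphere_inter_ball ho hR hrρ hcap)
    _ ≤ 1 ^ (finrank ℝ (ℝ ∙ o)ᗮ : ℝ) * μH[finrank ℝ (ℝ ∙ o)ᗮ] (sphere (0 : F) ρ ∩ ball o R) :=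
        (ℝ ∙ o)ᗮ.lipschitzWith_orthogonalProjectionOnto.hausdorffMeasure_image_le
          (Nat.cast_nonneg _) _
    _ = μH[finrank ℝ (ℝ ∙ o)ᗮ] (sphere (0 : F) ρ ∩ ball o R) := by
        rw [ENNReal.one_rpow, one_mul]

theorem ofReal_pi_mul_sq_le_hausdorffMeasure_sphere_inter_ball (hF : finrank ℝ F = 3)
    (hρ : 0 < ρ) (ho : ‖o‖ = ρ) (hR : 0 ≤ R) (hr : 0 ≤ r) (hrρ : r ≤ ρ)
    (hcap : 2 * ρ * (ρ - √(ρ ^ 2 - r ^ 2)) ≤ R ^ 2) :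
    ENNReal.ofReal (π * r ^ 2) ≤ μH[2] (sphere (0 : F) ρ ∩ ball o R) := by
  have : Fact (finrank ℝ F = 2 + 1) := ⟨hF⟩
  have hK : finrank ℝ (ℝ ∙ o)ᗮ = 2 * 1 :=
    finrank_orthogonal_span_singleton (norm_ne_zero_iff.1 (ho ▸ hρ.ne'))
  have : Nontrivial (ℝ ∙ o)ᗮ := Module.nontrivial_of_finrank_eq_succ hK
  calc ENNReal.ofReal (π * r ^ 2)
      = volume (ball (0 : (ℝ ∙ o)ᗮ) r) := by
        rw [InnerProductSpace.volume_ball_of_dim_even hK, hK, ← ENNReal.ofReal_pow hr,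
          ← ENNReal.ofReal_mul (by positivity)]
        norm_num [mul_comm]
    _ ≤ μH[2] (sphere (0 : F) ρ ∩ ball o R) := by
        simpa [hK] using volume_ball_le_hausdorffMeasure_sphere_inter_ball ho hR hrρ hcap

end Area

namespace Real

theorem exp_neg_two_mul_le_one_sub_sq_div_four {t : ℝ} (ht : 0 ≤ t) (ht2 : t ^ 2 ≤ 2) :
    exp (-2 * t) ≤ 1 - t ^ 2 / 4 := by
  have hq : 1 + 2 * t + 2 * t ^ 2 ≤ exp (2 * t) := by
    nlinarith [quadratic_le_exp_of_nonneg (by positivity : 0 ≤ 2 * t)]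
  rw [neg_mul, exp_neg, inv_le_iff_one_le_mul₀ (exp_pos _)]
  nlinarith [mul_le_mul_of_nonneg_left hq (by nlinarith : (0 : ℝ) ≤ 1 - t ^ 2 / 4)]

theorem sq_mul_exp_neg_two_mul_le_one {t : ℝ} (ht : 0 ≤ t) : t ^ 2 * exp (-2 * t) ≤ 1 := by
  have h : t ^ 2 ≤ exp (2 * t) := by
    rw [two_mul, exp_add, ← sq]
    exact pow_le_pow_left₀ ht ((le_add_of_nonneg_right zero_le_one).trans (add_one_le_exp t)) 2
  rwa [neg_mul, exp_neg, ← div_eq_mul_inv, div_le_one (exp_pos _)]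

end Real

theorem exists_radius_sq_mul_exp_le {ρ R : ℝ} (hρ : 0 < ρ) (hR : 0 ≤ R) :
    ∃ r, 0 ≤ r ∧ r ≤ ρ ∧ 2 * ρ * (ρ - √(ρ ^ 2 - r ^ 2)) ≤ R ^ 2 ∧
      R ^ 2 * exp (-2 * R / ρ) ≤ r ^ 2 := by
  have ht : 0 ≤ R / ρ := by positivity
  rw [mul_div_assoc]
  rcases le_or_gt (R ^ 2) (2 * ρ ^ 2) with hsmall | hlarge
  · -- `c` is the height along `o / ρ` of the boundary circle of the cap, which has radius
    -- `√(ρ² - c²)`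
    set c := ρ - R ^ 2 / (2 * ρ) with hc_def
    have hc : 0 ≤ c := by
      rw [sub_nonneg, div_le_iff₀ (by positivity)]; nlinarith
    have hcρ : c ≤ ρ := sub_le_self _ (by positivity)
    have hrc : 0 ≤ ρ ^ 2 - c ^ 2 := by nlinarith
    refine ⟨√(ρ ^ 2 - c ^ 2), sqrt_nonneg _, ?_, ?_, ?_⟩
    · exact sqrt_le_iff.2 ⟨hρ.le, by nlinarith⟩
    · rw [sq_sqrt hrc, sub_sub_cancel, sqrt_sq hc, hc_def, sub_sub_cancel,
        mul_div_cancel₀ _ (by positivity)]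
    · rw [sq_sqrt hrc]
      calc R ^ 2 * exp (-2 * (R / ρ)) ≤ R ^ 2 * (1 - (R / ρ) ^ 2 / 4) := by
            gcongr
            refine exp_neg_two_mul_le_one_sub_sq_div_four ht ?_
            rw [div_pow, div_le_iff₀ (by positivity)]
            exact hsmall
        _ = ρ ^ 2 - c ^ 2 := by
            rw [hc_def]
            field_simp
            ring
  · refine ⟨ρ, hρ.le, le_rfl, by rw [sub_self, sqrt_zero, sub_zero]; nlinarith, ?_⟩
    calc R ^ 2 * exp (-2 * (R / ρ)) = (R / ρ) ^ 2 * exp (-2 * (R / ρ)) * ρ ^ 2 := by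
          field_simp
      _ ≤ 1 * ρ ^ 2 := by gcongr; exact sq_mul_exp_neg_two_mul_le_one ht
      _ = ρ ^ 2 := one_mul _

/-- For the round sphere of radius `ρ` in `ℝ³`, any point `o` on it,
and any `R > 0`, the area of the spherical scoop satisfies
`Area(S_ρ ∩ B_R(o)) ≥ πR² e^{−2R/ρ}`. -/
theorem area_sphere_scoop_lower_bound (ρ R : ℝ) (hρ : 0 < ρ) (hR : 0 < R)
    (o : E) (ho : o ∈ Metric.sphere (0 : E) ρ) :
    ENNReal.ofReal (Real.pi * R ^ 2 * Real.exp (-2 * R / ρ))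
      ≤ μH[2] (Metric.sphere (0 : E) ρ ∩ Metric.ball o R) := by
  obtain ⟨r, hr, hrρ, hcap, hexp⟩ := exists_radius_sq_mul_exp_le hρ hR.le
  calc ENNReal.ofReal (π * R ^ 2 * exp (-2 * R / ρ))
      ≤ ENNReal.ofReal (π * r ^ 2) := by
        rw [mul_assoc]
        gcongr
    _ ≤ μH[2] (sphere (0 : E) ρ ∩ ball o R) :=
        ofReal_pi_mul_sq_le_hausdorffMeasure_sphere_inter_ball finrank_euclideanSpace_fin hρ
          (by simpa using ho) hR.le hr hrρ hcap
end
end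

section
/- For the infinite circular cylinder C_ρ = {(x,y,z) ∈ ℝ³ : x² + y² = ρ²} and any point o ∈ C_ρ and any R > 0, the area of C_ρ ∩ B_R(o) satisfies Area(C_ρ ∩ B_R(o)) ≥ πR²·e^{−2R/ρ}. -/
open MeasureTheory

noncomputable section

local notation "E" => EuclideanSpace ℝ (Fin 3)

open Real Metric

/-!
Project the scoop orthogonally onto the tangent plane of the cylinder at `o`. The projection is
1-Lipschitz, so it does not increase `μH[2]`, and its image contains the disc of radius
`r = R e^{-R/ρ}`: a point `(a, b)` of that disc lifts to the half of the cylinder facing `o` at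
squared distance at most `a² (1 + a²/ρ²) + b² < r² (1 + r²/ρ²) ≤ R²` from `o`, the last step
being `1 + u² ≤ e^{2u}` for `u = R/ρ`. The disc has area `π r² = π R² e^{-2R/ρ}`.
-/

lemma two_mul_one_sub_le_sq_add_pow_four {c s : ℝ} (hc : 0 ≤ c) (hcs : c ^ 2 + s ^ 2 = 1) :
    2 * (1 - c) ≤ s ^ 2 + s ^ 4 := by
  have hc1 : c ≤ 1 := by nlinarith
  have h : (1 + c) * (s ^ 2 + s ^ 4 - 2 * (1 - c)) = s ^ 2 * (c * (1 - c) * (2 + c)) := by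
    linear_combination ((1 + c) * (2 + s ^ 2 - c ^ 2) - c * (1 - c) * (2 + c)) * hcs
  have : 0 ≤ (1 + c) * (s ^ 2 + s ^ 4 - 2 * (1 - c)) := by
    rw [h]; have := sub_nonneg.2 hc1; positivity
  linarith [nonneg_of_mul_nonneg_right this (by linarith)]

lemma mul_exp_neg_le_one (u : ℝ) : u * exp (-u) ≤ 1 :=
  (mul_exp_neg_le_exp_neg_one u).trans (exp_le_one_iff.2 (by norm_num))

lemma sq_mul_exp_neg_mul_one_add_sq_le {u : ℝ} (hu : 0 ≤ u) :
    (u * exp (-u)) ^ 2 * (1 + (u * exp (-u)) ^ 2) ≤ u ^ 2 := by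
  have hexp : 1 + u ^ 2 ≤ exp (2 * u) := by
    nlinarith [quadratic_le_exp_of_nonneg (by linarith : 0 ≤ 2 * u)]
  have hx : exp (-u) ^ 2 * exp (2 * u) = 1 := by
    rw [← exp_nat_mul, ← exp_add]; norm_num
  have hux : u ^ 2 * exp (-u) ^ 2 ≤ u ^ 2 := by
    have := exp_le_one_iff.2 (neg_nonpos.2 hu)
    nlinarith [exp_pos (-u), sq_nonneg u]
  have : exp (-u) ^ 2 * (1 + u ^ 2 * exp (-u) ^ 2) ≤ 1 := calc
    _ ≤ exp (-u) ^ 2 * (1 + u ^ 2) := by gcongr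
    _ ≤ exp (-u) ^ 2 * exp (2 * u) := by gcongr
    _ = 1 := hx
  nlinarith [sq_nonneg u]

lemma volume_disc {r : ℝ} (hr : 0 ≤ r) :
    volume {p : ℝ × ℝ | p.1 ^ 2 + p.2 ^ 2 < r ^ 2} = ENNReal.ofReal (π * r ^ 2) := by
  have hdisc : {p : ℝ × ℝ | p.1 ^ 2 + p.2 ^ 2 < r ^ 2}
      = Complex.measurableEquivRealProd.symm ⁻¹' ball 0 r := by
    ext p
    simp only [Set.mem_ofPred_eq, Set.mem_preimage, mem_ball_zero_iff,
      Complex.measurableEquivRealProd_symm_apply, Complex.norm_def, Complex.normSq_apply]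
    rw [sqrt_lt (by nlinarith) hr]
    ring_nf
  rw [hdisc, Complex.volume_preserving_equiv_real_prod.symm.measure_preimage
    measurableSet_ball.nullMeasurableSet, Complex.volume_ball, ENNReal.ofReal_mul pi_pos.le,
    ENNReal.ofReal_pow hr, mul_comm, ← NNReal.coe_real_pi, ENNReal.ofReal_coe_nnreal]

def circularCylinder (ρ : ℝ) : Set E := {q : E | q 0 ^ 2 + q 1 ^ 2 = ρ ^ 2}

lemma mem_circularCylinder {ρ : ℝ} {q : E} :
    q ∈ circularCylinder ρ ↔ q 0 ^ 2 + q 1 ^ 2 = ρ ^ 2 := Iff.rfl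

/-- Coordinates of the orthogonal projection of `q - o` onto the tangent plane of the cylinder at
`o`, in the orthonormal frame `(-o 1, o 0, 0) / ρ`, `(0, 0, 1)`. -/
def tangentCoord (ρ : ℝ) (o q : E) : ℝ × ℝ := ((o 0 * q 1 - o 1 * q 0) / ρ, q 2 - o 2)

/-- Rotates `o` about the axis by the angle with cosine `c` and sine `s`, then translates it by `b`
along the axis. -/
def screwMotion (o : E) (c s b : ℝ) : E := !₂[o 0 * c - o 1 * s, o 1 * c + o 0 * s, o 2 + b]

section

variable {ρ : ℝ} {o : E}

lemma lipschitzWith_one_tangentCoord (hρ : 0 < ρ) (ho : o ∈ circularCylinder ρ) :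
    LipschitzWith 1 (tangentCoord ρ o) := by
  refine LipschitzWith.of_dist_le_mul fun x y => ?_
  rw [NNReal.coe_one, one_mul, Prod.dist_eq, EuclideanSpace.dist_eq, Fin.sum_univ_three]
  simp only [tangentCoord, Real.dist_eq, sq_abs]
  refine max_le (abs_le_sqrt ?_) (abs_le_sqrt ?_)
  · rw [div_sub_div_same, div_pow, div_le_iff₀ (by positivity), ← mem_circularCylinder.1 ho]
    nlinarith [sq_nonneg (o 0 * (x 0 - y 0) + o 1 * (x 1 - y 1)), sq_nonneg (x 2 - y 2),
      sq_nonneg ρ]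
  · nlinarith [sq_nonneg (x 0 - y 0), sq_nonneg (x 1 - y 1)]

section screwMotion

variable {c s : ℝ} (b : ℝ)

lemma screwMotion_mem_circularCylinder (ho : o ∈ circularCylinder ρ) (hcs : c ^ 2 + s ^ 2 = 1) :
    screwMotion o c s b ∈ circularCylinder ρ := by
  rw [mem_circularCylinder] at ho ⊢
  simp only [screwMotion, Matrix.cons_val_zero, Matrix.cons_val_one]
  linear_combination (c ^ 2 + s ^ 2) * ho + ρ ^ 2 * hcs

lemma tangentCoord_screwMotion (hρ : ρ ≠ 0) (ho : o ∈ circularCylinder ρ) :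
    tangentCoord ρ o (screwMotion o c s b) = (ρ * s, b) := by
  rw [mem_circularCylinder] at ho
  simp only [tangentCoord, screwMotion, Matrix.cons_val_zero, Matrix.cons_val_one,
    Matrix.cons_val, add_sub_cancel_left]
  congr 1
  field_simp
  linear_combination s * ho

lemma dist_screwMotion_sq (ho : o ∈ circularCylinder ρ) (hcs : c ^ 2 + s ^ 2 = 1) :
    dist (screwMotion o c s b) o ^ 2 = 2 * ρ ^ 2 * (1 - c) + b ^ 2 := by
  rw [mem_circularCylinder] at ho
  rw [EuclideanSpace.dist_eq, sq_sqrt (by positivity), Fin.sum_univ_three]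
  simp only [screwMotion, Real.dist_eq, sq_abs, Matrix.cons_val_zero, Matrix.cons_val_one,
    Matrix.cons_val, add_sub_cancel_left]
  linear_combination (c ^ 2 + s ^ 2 - 2 * c + 1) * ho + ρ ^ 2 * hcs

end screwMotion

lemma disc_subset_image_tangentCoord {r R : ℝ} (hρ : 0 < ρ) (ho : o ∈ circularCylinder ρ)
    (hr : 0 ≤ r) (hrρ : r ≤ ρ) (hR : 0 ≤ R) (hrR : r ^ 2 * (1 + (r / ρ) ^ 2) ≤ R ^ 2) :
    {p : ℝ × ℝ | p.1 ^ 2 + p.2 ^ 2 < r ^ 2} ⊆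
      tangentCoord ρ o '' (circularCylinder ρ ∩ ball o R) := by
  rintro ⟨a, b⟩ hab
  simp only [Set.mem_ofPred_eq] at hab
  set s := a / ρ
  set c := √(1 - s ^ 2)
  have hs : s ^ 2 ≤ 1 := by
    rw [div_pow, div_le_one (by positivity)]; nlinarith
  have hcs : c ^ 2 + s ^ 2 = 1 := by rw [sq_sqrt (by linarith)]; ring
  refine ⟨screwMotion o c s b, ⟨screwMotion_mem_circularCylinder b ho hcs, ?_⟩, ?_⟩
  · rw [mem_ball, ← pow_lt_pow_iff_left₀ dist_nonneg hR two_ne_zero, dist_screwMotion_sq b ho hcs]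
    have hchord := two_mul_one_sub_le_sq_add_pow_four (sqrt_nonneg _) hcs
    have has : ρ * s = a := mul_div_cancel₀ _ hρ.ne'
    have hsr : s ^ 2 ≤ (r / ρ) ^ 2 := by
      rw [div_pow, div_pow]; exact div_le_div_of_nonneg_right (by nlinarith) (by positivity)
    calc 2 * ρ ^ 2 * (1 - c) + b ^ 2 ≤ ρ ^ 2 * (s ^ 2 + s ^ 4) + b ^ 2 := by nlinarith
      _ = a ^ 2 * (1 + s ^ 2) + b ^ 2 := by linear_combination (ρ * s + a) * (1 + s ^ 2) * has
      _ ≤ (a ^ 2 + b ^ 2) * (1 + (r / ρ) ^ 2) := by nlinarith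
      _ < r ^ 2 * (1 + (r / ρ) ^ 2) := by gcongr
      _ ≤ R ^ 2 := hrR
  · rw [tangentCoord_screwMotion b hρ.ne' ho, mul_div_cancel₀ _ hρ.ne']

end

/-- For the infinite circular cylinder
`C_ρ = {(x,y,z) : x² + y² = ρ²}` in `ℝ³`, any point `o ∈ C_ρ`, and any `R > 0`, the
area of the scoop satisfies `Area(C_ρ ∩ B_R(o)) ≥ πR² e^{−2R/ρ}`. -/
theorem area_cylinder_scoop_lower_bound (ρ R : ℝ) (hρ : 0 < ρ) (hR : 0 < R)
    (o : E) (ho : o ∈ {q : E | q 0 ^ 2 + q 1 ^ 2 = ρ ^ 2}) :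
    ENNReal.ofReal (Real.pi * R ^ 2 * Real.exp (-2 * R / ρ))
      ≤ μH[2] ({q : E | q 0 ^ 2 + q 1 ^ 2 = ρ ^ 2} ∩ Metric.ball o R) := by
  set t := R / ρ * exp (-(R / ρ))
  have hrρ : ρ * t ≤ ρ := mul_le_of_le_one_right hρ.le (mul_exp_neg_le_one _)
  have hrR : (ρ * t) ^ 2 * (1 + (ρ * t / ρ) ^ 2) ≤ R ^ 2 := calc
    _ = ρ ^ 2 * (t ^ 2 * (1 + t ^ 2)) := by rw [mul_div_cancel_left₀ _ hρ.ne']; ring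
    _ ≤ ρ ^ 2 * (R / ρ) ^ 2 := by gcongr; exact sq_mul_exp_neg_mul_one_add_sq_le (by positivity)
    _ = R ^ 2 := by field_simp
  have harea : π * R ^ 2 * exp (-2 * R / ρ) = π * (ρ * t) ^ 2 := by
    rw [show -2 * R / ρ = -(R / ρ) + -(R / ρ) by ring, exp_add]
    simp only [t]
    field_simp
  calc ENNReal.ofReal (π * R ^ 2 * exp (-2 * R / ρ))
      = μH[2] {p : ℝ × ℝ | p.1 ^ 2 + p.2 ^ 2 < (ρ * t) ^ 2} := by
        rw [hausdorffMeasure_prod_real, volume_disc (by positivity), harea]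
    _ ≤ μH[2] (tangentCoord ρ o '' (circularCylinder ρ ∩ ball o R)) :=
        measure_mono (disc_subset_image_tangentCoord hρ ho (by positivity) hrρ hR.le hrR)
    _ ≤ μH[2] (circularCylinder ρ ∩ ball o R) := by
        simpa using (lipschitzWith_one_tangentCoord hρ ho).hausdorffMeasure_image_le zero_le_two _
end
end

section
/- Let A : (0,∞) → (0,∞) be locally absolutely continuous and nondecreasing with A'(t) ≥ (2/t)A(t)(1 − ht) for a.e. t, and suppose lim_{s→0⁺} A(s)/(πs²) = θ > 0. Then for every R > 0, A(R) ≥ θ·e^{−2hR}·πR². -/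
/-!
Since `A` is absolutely continuous, the product rule applies to `A(t) e^{2ht} / t²`, whose
derivative `e^{2ht}/t² · (A' − (2/t) A (1 − ht))` is nonnegative by the differential inequality.
So this quantity is nondecreasing, and letting the lower endpoint tend to `0` the density
hypothesis gives `A(R) e^{2hR} / R² ≥ θπ`.
-/

open MeasureTheory Set Filter Real Topology

theorem AbsolutelyContinuousOnInterval.mul_le_mul_of_ae_deriv_mul_nonneg {f g : ℝ → ℝ} {a b : ℝ}
    (hab : a ≤ b) (hf : AbsolutelyContinuousOnInterval f a b)
    (hg : AbsolutelyContinuousOnInterval g a b)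
    (hfg : ∀ᵐ x, x ∈ Icc a b → 0 ≤ deriv f x * g x + f x * deriv g x) :
    f a * g a ≤ f b * g b := by
  rw [← sub_nonneg, ← hf.integral_deriv_mul_eq_sub hg]
  exact intervalIntegral.integral_nonneg_of_ae_restrict hab
    ((ae_restrict_iff' measurableSet_Icc).2 hfg)

section AreaGrowth

variable {A A' : ℝ → ℝ} {h : ℝ}

lemma hasDerivAt_exp_mul_div_sq {x : ℝ} (hx : 0 < x) :
    HasDerivAt (fun t => exp (2 * h * t) / t ^ 2) (exp (2 * h * x) / x ^ 2 * (2 * h - 2 / x)) x := by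
  refine ((((hasDerivAt_id' x).const_mul (2 * h)).exp).fun_div (hasDerivAt_pow 2 x)
    (by positivity)).congr_deriv ?_
  field_simp
  ring

lemma contDiffOn_exp_mul_div_sq {a b : ℝ} (ha : 0 < a) (hab : a ≤ b) :
    ContDiffOn ℝ 1 (fun t => exp (2 * h * t) / t ^ 2) (uIcc a b) := by
  fun_prop (disch := intro x hx; rw [uIcc_of_le hab] at hx; have := ha.trans_le hx.1; positivity)

lemma monotoneOn_mul_exp_mul_div_sq
    (hint : ∀ a b : ℝ, 0 < a → a ≤ b → IntervalIntegrable A' volume a b)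
    (hftc : ∀ a b : ℝ, 0 < a → a ≤ b → A b - A a = ∫ t in a..b, A' t)
    (hineq : ∀ᵐ t ∂(volume.restrict (Ioi (0 : ℝ))), 2 / t * A t * (1 - h * t) ≤ A' t) :
    MonotoneOn (fun t => A t * (exp (2 * h * t) / t ^ 2)) (Ioi 0) := by
  intro a (ha : 0 < a) b _ hab
  set F : ℝ → ℝ := fun x => A a + ∫ t in a..x, A' t
  set g : ℝ → ℝ := fun t => exp (2 * h * t) / t ^ 2
  have hFA : ∀ x, a ≤ x → F x = A x := fun x hx => by
    simp only [F, ← hftc a x ha hx, add_sub_cancel]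
  have hFac : AbsolutelyContinuousOnInterval F a b :=
    contDiffOn_const.absolutelyContinuousOnInterval.add
      ((hint a b ha hab).absolutelyContinuousOnInterval_intervalIntegral (by simp))
  have hgac : AbsolutelyContinuousOnInterval g a b :=
    (contDiffOn_exp_mul_div_sq ha hab).absolutelyContinuousOnInterval
  have hF' : ∀ᵐ x, x ∈ uIcc a b → HasDerivAt F (A' x) x := by
    filter_upwards [(hint a b ha hab).ae_hasDerivAt_integral] with x hx hxab
    exact (hx hxab a (by simp)).const_add (A a)
  have hineq' : ∀ᵐ x, x ∈ Ioi 0 → 2 / x * A x * (1 - h * x) ≤ A' x :=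
    (ae_restrict_iff' measurableSet_Ioi).1 hineq
  have hmul := hFac.mul_le_mul_of_ae_deriv_mul_nonneg hab hgac <| by
    filter_upwards [hF', hineq'] with x hFx hx hxab
    have hx0 : 0 < x := ha.trans_le hxab.1
    rw [(hFx (by rwa [uIcc_of_le hab])).deriv, (hasDerivAt_exp_mul_div_sq hx0).deriv, hFA x hxab.1]
    have key : A' x * g x + A x * (g x * (2 * h - 2 / x))
        = g x * (A' x - 2 / x * A x * (1 - h * x)) := by field_simp; ring
    rw [key]
    exact mul_nonneg (by positivity) (sub_nonneg.2 (hx hx0))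
  simpa only [hFA a le_rfl, hFA b hab] using hmul

end AreaGrowth

theorem area_lower_bound_of_density_general (A A' : ℝ → ℝ) (h θ : ℝ)
    (hint : ∀ a b : ℝ, 0 < a → a ≤ b → IntervalIntegrable A' volume a b)
    (hftc : ∀ a b : ℝ, 0 < a → a ≤ b → A b - A a = ∫ t in a..b, A' t)
    (hineq : ∀ᵐ t ∂(volume.restrict (Ioi (0 : ℝ))),
      2 / t * A t * (1 - h * t) ≤ A' t)
    (hdens : Tendsto (fun s => A s / (Real.pi * s ^ 2)) (nhdsWithin 0 (Ioi 0)) (nhds θ)) :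
    ∀ R : ℝ, 0 < R → θ * Real.exp (-2 * h * R) * Real.pi * R ^ 2 ≤ A R := by
  intro R hR
  have hmono := monotoneOn_mul_exp_mul_div_sq hint hftc hineq
  have hlim : Tendsto (fun s => A s * (exp (2 * h * s) / s ^ 2)) (𝓝[>] 0) (𝓝 (θ * π)) := by
    have hexp : Tendsto (fun s => π * exp (2 * h * s)) (𝓝[>] 0) (𝓝 π) :=
      ((by fun_prop : Continuous fun s => π * exp (2 * h * s)).tendsto' 0 π
        (by simp)).mono_left nhdsWithin_le_nhds
    refine (hdens.mul hexp).congr' ?_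
    filter_upwards [self_mem_nhdsWithin] with s (hs : 0 < s)
    field_simp
  have hbound : θ * π ≤ A R * (exp (2 * h * R) / R ^ 2) := by
    refine le_of_tendsto hlim ?_
    filter_upwards [Ioc_mem_nhdsGT hR] with s hs
    exact hmono hs.1 hR hs.2
  calc θ * exp (-2 * h * R) * π * R ^ 2 = θ * π * (exp (-2 * h * R) * R ^ 2) := by ring
    _ ≤ A R * (exp (2 * h * R) / R ^ 2) * (exp (-2 * h * R) * R ^ 2) := by gcongr
    _ = A R := by rw [neg_mul, neg_mul, exp_neg]; field_simp

/-- Let `A : (0,∞) → (0,∞)` be nondecreasing and locally absolutely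
continuous (encoded by the fundamental theorem of calculus property with an a.e.
derivative `A'`), satisfying `A'(t) ≥ (2/t) A(t) (1 − h t)` for a.e. `t > 0`, and with
density `lim_{s→0⁺} A(s)/(πs²) = θ > 0`.  Then `A(R) ≥ θ e^{−2hR} πR²` for all `R > 0`.
This is the analytic core of the main theorem of the paper. -/
theorem area_lower_bound_of_density (A A' : ℝ → ℝ) (h θ : ℝ) (hh : 0 ≤ h) (hθ : 0 < θ)
    (hpos : ∀ t ∈ Ioi (0 : ℝ), 0 < A t)
    (hmono : MonotoneOn A (Ioi (0 : ℝ)))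
    (hderiv : ∀ᵐ t ∂(volume.restrict (Ioi (0 : ℝ))), HasDerivAt A (A' t) t)
    (hint : ∀ a b : ℝ, 0 < a → a ≤ b → IntervalIntegrable A' volume a b)
    (hftc : ∀ a b : ℝ, 0 < a → a ≤ b → A b - A a = ∫ t in a..b, A' t)
    (hineq : ∀ᵐ t ∂(volume.restrict (Ioi (0 : ℝ))),
      2 / t * A t * (1 - h * t) ≤ A' t)
    (hdens : Tendsto (fun s => A s / (Real.pi * s ^ 2)) (nhdsWithin 0 (Ioi 0)) (nhds θ)) :
    ∀ R : ℝ, 0 < R → θ * Real.exp (-2 * h * R) * Real.pi * R ^ 2 ≤ A R :=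
  area_lower_bound_of_density_general A A' h θ hint hftc hineq hdens
end

section
/- Let N ≥ 1, h ≥ 0, θ > 0, and let D ⊂ ℝ^N be the compact convex polytope {r ∈ ℝ^N : rᵢ ≥ 0 and rᵢ + rⱼ ≤ dᵢⱼ for all i ≠ j, and rᵢ ≤ 1/h} for given symmetric positive bounds dᵢⱼ. Define eva(r) = Σᵢ θπ e^{−2hrᵢ} rᵢ². If dᵢⱼ ≤ (2−√2)/h for all i,j, then the maximum of eva over D is attained at a vertex (extreme point) of D. -/
/-!
Write `eva = θπ ∑ g(rᵢ)` with `g(z) = e^{-2hz} z²`. The maximisers of `eva` on `D` form a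
nonempty compact set, which has an extreme point `r` by Krein–Milman. If `r` lies inside a
segment `[x, y] ⊆ D`, then `eva` is convex on that segment, so `x` and `y` are maximisers too
and hence equal to `r`: thus `r` is an extreme point of `D`.

Convexity on the segment: along `z = x + t (y - x)` the second derivative of `∑ g(zᵢ)` is
`∑ (yᵢ - xᵢ)² Q(h zᵢ)` with `Q(a) = e^{-2a}(4a² - 8a + 2)`. `Q(a) < 0` forces `a > 1 - √2/2`,
so the bound `h (zᵢ + zⱼ) ≤ 2 - √2` leaves at most one bad index `m`. Since `g` increases on
`[0, 1/h]`, maximality of `r` makes some constraint `rₘ + rⱼ = dₘⱼ` tight when `xₘ ≠ yₘ`; both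
endpoints then satisfy it with equality, so `yⱼ - xⱼ = -(yₘ - xₘ)`, and `Q(a) + Q(b) ≥ 0`
whenever `a + b ≤ 2 - √2` makes the pair `m, j` contribute nonnegatively.
-/

open Set Filter Topology Real

lemma eq_of_le_of_le_of_le_add {a b p q c : ℝ} (ha : 0 < a) (hb : 0 < b) (hab : a + b = 1)
    (hp : p ≤ c) (hq : q ≤ c) (hc : c ≤ a * p + b * q) : p = c ∧ q = c := by
  have hp' := mul_le_mul_of_nonneg_left hp ha.le
  have hq' := mul_le_mul_of_nonneg_left hq hb.le
  have hsum : a * c + b * c = c := by rw [← add_mul, hab, one_mul]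
  exact ⟨le_antisymm hp (le_of_mul_le_mul_left (by linarith) ha),
    le_antisymm hq (le_of_mul_le_mul_left (by linarith) hb)⟩

theorem IsCompact.exists_mem_extremePoints_isMaxOn {E : Type*} [AddCommGroup E] [Module ℝ E]
    [TopologicalSpace E] [T2Space E] [IsTopologicalAddGroup E] [ContinuousSMul ℝ E]
    [LocallyConvexSpace ℝ E] {s : Set E} {f : E → ℝ} (hs : IsCompact s) (hne : s.Nonempty)
    (hf : ContinuousOn f s)
    (hconv : ∀ x ∈ s, ∀ y ∈ s, ∀ a b : ℝ, 0 < a → 0 < b → a + b = 1 →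
      IsMaxOn f s (a • x + b • y) → f (a • x + b • y) ≤ a * f x + b * f y) :
    ∃ r ∈ s.extremePoints ℝ, IsMaxOn f s r := by
  obtain ⟨r₀, hr₀s, hr₀⟩ := hs.exists_isMaxOn hne hf
  have hM : IsCompact (s ∩ f ⁻¹' Ici (f r₀)) :=
    hs.of_isClosed_subset (hf.preimage_isClosed_of_isClosed hs.isClosed isClosed_Ici)
      inter_subset_left
  obtain ⟨r, ⟨hrs, hr₀r⟩, hr⟩ := hM.extremePoints_nonempty ⟨r₀, hr₀s, le_refl (f r₀)⟩
  have hmax : IsMaxOn f s r := isMaxOn_iff.2 fun z hz => (hr₀ hz).trans hr₀r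
  refine ⟨r, mem_extremePoints_iff_left.2 ⟨hrs, ?_⟩, hmax⟩
  rintro x hx y hy ⟨a, b, ha, hb, hab, rfl⟩
  obtain ⟨hfx, hfy⟩ := eq_of_le_of_le_of_le_add ha hb hab (hmax hx) (hmax hy)
    (hconv x hx y hy a b ha hb hab hmax)
  exact hr ⟨hx, by rwa [mem_preimage, hfx]⟩ ⟨hy, by rwa [mem_preimage, hfy]⟩
    ⟨a, b, ha, hb, hab, rfl⟩

noncomputable def evaTerm (h z : ℝ) : ℝ := exp (-2 * h * z) * z ^ 2

noncomputable def evaTermDeriv (h z : ℝ) : ℝ := exp (-2 * h * z) * (2 * z - 2 * h * z ^ 2)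

noncomputable def evaCurvature (a : ℝ) : ℝ := exp (-(2 * a)) * (4 * a ^ 2 - 8 * a + 2)

lemma two_sub_sqrt_two_nonneg : 0 ≤ 2 - √2 := by
  nlinarith [sq_sqrt (show (0 : ℝ) ≤ 2 by norm_num), sqrt_nonneg 2]

lemma four_mul_sq_sub_eight_mul_add_two_eq (a : ℝ) :
    4 * a ^ 2 - 8 * a + 2 = 4 * (a - (1 - √2 / 2)) * (a - (1 - √2 / 2) - √2) := by
  linear_combination (sq_sqrt (show (0 : ℝ) ≤ 2 by norm_num))

lemma four_mul_sq_sub_eight_mul_add_two_nonneg {a : ℝ} (ha : a ≤ 1 - √2 / 2) :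
    0 ≤ 4 * a ^ 2 - 8 * a + 2 := by
  rw [four_mul_sq_sub_eight_mul_add_two_eq]
  have := sqrt_nonneg 2
  nlinarith

lemma evaCurvature_nonneg {a : ℝ} (ha : a ≤ 1 - √2 / 2) : 0 ≤ evaCurvature a :=
  mul_nonneg (exp_pos _).le (four_mul_sq_sub_eight_mul_add_two_nonneg ha)

lemma evaCurvature_antitoneOn : AntitoneOn evaCurvature (Iic (1 - √2 / 2)) := by
  intro a (ha : a ≤ _) b (hb : b ≤ _) hab
  refine mul_le_mul (exp_le_exp.2 (by linarith)) ?_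
    (four_mul_sq_sub_eight_mul_add_two_nonneg hb) (exp_pos _).le
  rw [four_mul_sq_sub_eight_mul_add_two_eq, four_mul_sq_sub_eight_mul_add_two_eq]
  have := sqrt_nonneg 2
  nlinarith

lemma evaCurvature_sub_add_add_nonneg {δ : ℝ} (hδ : 0 ≤ δ) :
    0 ≤ evaCurvature (1 - √2 / 2 - δ) + evaCurvature (1 - √2 / 2 + δ) := by
  have hsum : evaCurvature (1 - √2 / 2 - δ) + evaCurvature (1 - √2 / 2 + δ) =
      exp (-(2 - √2)) * (4 * δ ^ 2 * (exp (2 * δ) + exp (-(2 * δ))) +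
        4 * √2 * δ * (exp (2 * δ) - exp (-(2 * δ)))) := by
    simp only [evaCurvature, four_mul_sq_sub_eight_mul_add_two_eq]
    rw [show -(2 * (1 - √2 / 2 - δ)) = -(2 - √2) + 2 * δ by ring,
      show -(2 * (1 - √2 / 2 + δ)) = -(2 - √2) + -(2 * δ) by ring, exp_add, exp_add]
    ring
  rw [hsum]
  have hexp : exp (-(2 * δ)) ≤ exp (2 * δ) := exp_le_exp.2 (by linarith)
  have := sub_nonneg.2 hexp
  positivity

lemma evaCurvature_add_nonneg {a b : ℝ} (hab : a + b ≤ 2 - √2) :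
    0 ≤ evaCurvature a + evaCurvature b := by
  wlog hle : a ≤ b generalizing a b
  · rw [add_comm]; exact this (by linarith) (by linarith)
  rcases le_or_gt b (1 - √2 / 2) with hb | hb
  · exact add_nonneg (evaCurvature_nonneg (hle.trans hb)) (evaCurvature_nonneg hb)
  set δ := b - (1 - √2 / 2)
  have hδ : b = 1 - √2 / 2 + δ := by ring
  have ha : a ≤ 1 - √2 / 2 - δ := by linarith
  have hanti := evaCurvature_antitoneOn (mem_Iic.2 (ha.trans (by linarith)))
    (mem_Iic.2 (by linarith : 1 - √2 / 2 - δ ≤ 1 - √2 / 2)) ha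
  rw [hδ]
  linarith [evaCurvature_sub_add_add_nonneg (by linarith : 0 ≤ δ)]

theorem sum_mul_evaCurvature_nonneg {ι : Type*} [Fintype ι] {w a : ι → ℝ} (hw : ∀ i, 0 ≤ w i)
    (hpair : ∀ i j, i ≠ j → a i + a j ≤ 2 - √2)
    (hpartner : ∀ i, w i ≠ 0 → ∃ j ≠ i, w j = w i) :
    0 ≤ ∑ i, w i * evaCurvature (a i) := by
  classical
  by_cases hall : ∀ i, 0 ≤ w i * evaCurvature (a i)
  · exact Finset.sum_nonneg fun i _ => hall i
  push Not at hall
  obtain ⟨m, hm⟩ := hall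
  have hlarge : ∀ i, evaCurvature (a i) < 0 → 1 - √2 / 2 < a i :=
    fun i hi => lt_of_not_ge fun h => hi.not_ge (evaCurvature_nonneg h)
  have hQm : evaCurvature (a m) < 0 := neg_of_mul_neg_right hm (hw m)
  have hothers : ∀ i ≠ m, 0 ≤ evaCurvature (a i) := fun i him => le_of_not_gt fun hi => by
    linarith [hlarge i hi, hlarge m hQm, hpair i m him]
  obtain ⟨j, hjm, hwj⟩ := hpartner m (left_ne_zero_of_mul hm.ne)
  calc 0 ≤ w m * (evaCurvature (a m) + evaCurvature (a j)) :=
        mul_nonneg (hw m) (evaCurvature_add_nonneg (hpair m j hjm.symm))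
    _ = w m * evaCurvature (a m) + w j * evaCurvature (a j) := by rw [hwj]; ring
    _ ≤ w m * evaCurvature (a m) + ∑ i ∈ Finset.univ.erase m, w i * evaCurvature (a i) :=
        add_le_add_right (Finset.single_le_sum
          (fun i hi => mul_nonneg (hw i) (hothers i (Finset.ne_of_mem_erase hi)))
          (Finset.mem_erase.2 ⟨hjm, Finset.mem_univ j⟩)) _
    _ = ∑ i, w i * evaCurvature (a i) :=
        Finset.add_sum_erase _ (fun i => w i * evaCurvature (a i)) (Finset.mem_univ m)

lemma hasDerivAt_evaTerm (h z : ℝ) : HasDerivAt (evaTerm h) (evaTermDeriv h z) z := by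
  have he := ((hasDerivAt_id z).const_mul (-2 * h)).exp
  exact (he.fun_mul (hasDerivAt_pow 2 z)).congr_deriv (by simp only [evaTermDeriv, id]; ring)

lemma hasDerivAt_evaTermDeriv (h z : ℝ) :
    HasDerivAt (evaTermDeriv h) (evaCurvature (h * z)) z := by
  have he := ((hasDerivAt_id z).const_mul (-2 * h)).exp
  have hp := ((hasDerivAt_id z).const_mul 2).fun_sub ((hasDerivAt_pow 2 z).const_mul (2 * h))
  exact (he.fun_mul hp).congr_deriv (by simp only [evaCurvature, id]; ring_nf)

lemma strictMonoOn_evaTerm (h : ℝ) : StrictMonoOn (evaTerm h) (Icc 0 (1 / h)) := by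
  refine strictMonoOn_of_deriv_pos (convex_Icc _ _)
    (fun z _ => (hasDerivAt_evaTerm h z).continuousAt.continuousWithinAt) fun z hz => ?_
  rw [interior_Icc, mem_Ioo] at hz
  have hpos : 0 < h := one_div_pos.1 (hz.1.trans hz.2)
  have hhz : h * z < 1 := by rw [lt_div_iff₀ hpos] at hz; linarith
  rw [(hasDerivAt_evaTerm h z).deriv, evaTermDeriv]
  exact mul_pos (exp_pos _) (by nlinarith)

theorem convexOn_sum_evaTerm_line {ι : Type*} [Fintype ι] {h : ℝ} {x u : ι → ℝ} {s : Set ℝ}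
    (hs : Convex ℝ s)
    (hpair : ∀ t ∈ s, ∀ i j, i ≠ j → h * (x i + t * u i) + h * (x j + t * u j) ≤ 2 - √2)
    (hpartner : ∀ i, u i ≠ 0 → ∃ j ≠ i, u j = -u i) :
    ConvexOn ℝ s (fun t => ∑ i, evaTerm h (x i + t * u i)) := by
  have hline : ∀ i t, HasDerivAt (fun t => x i + t * u i) (u i) t :=
    fun i t => (hasDerivAt_mul_const (u i)).const_add (x i)
  have hφ : ∀ t, HasDerivAt (fun t => ∑ i, evaTerm h (x i + t * u i))
      (∑ i, evaTermDeriv h (x i + t * u i) * u i) t :=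
    fun t => HasDerivAt.fun_sum fun i _ => (hasDerivAt_evaTerm h _).comp t (hline i t)
  have hφ' : ∀ t, HasDerivAt (fun t => ∑ i, evaTermDeriv h (x i + t * u i) * u i)
      (∑ i, u i ^ 2 * evaCurvature (h * (x i + t * u i))) t := fun t =>
    (HasDerivAt.fun_sum fun i _ => ((hasDerivAt_evaTermDeriv h _).comp t (hline i t)).mul_const
      (u i)).congr_deriv (Finset.sum_congr rfl fun i _ => by ring)
  refine convexOn_of_hasDerivWithinAt2_nonneg hs
    (fun t _ => (hφ t).continuousAt.continuousWithinAt) (fun t _ => (hφ t).hasDerivWithinAt)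
    (fun t _ => (hφ' t).hasDerivWithinAt) fun t ht => ?_
  refine sum_mul_evaCurvature_nonneg (fun i => sq_nonneg _) (hpair t (interior_subset ht))
    fun i hi => ?_
  obtain ⟨j, hji, hj⟩ := hpartner i (pow_ne_zero_iff two_ne_zero |>.1 hi)
  exact ⟨j, hji, by rw [hj, neg_sq]⟩

def admissibleRadii {ι : Type*} (d : ι → ι → ℝ) (R : ℝ) : Set (ι → ℝ) :=
  {r | (∀ i, 0 ≤ r i) ∧ (∀ i j, i ≠ j → r i + r j ≤ d i j) ∧ ∀ i, r i ≤ R}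

section admissibleRadii

variable {ι : Type*} {d : ι → ι → ℝ} {R : ℝ}

lemma zero_mem_admissibleRadii (hdnonneg : ∀ i j, i ≠ j → 0 ≤ d i j) (hR : 0 ≤ R) :
    0 ∈ admissibleRadii d R :=
  ⟨fun _ => le_rfl, fun i j hij => by simpa using hdnonneg i j hij, fun _ => hR⟩

lemma convex_admissibleRadii : Convex ℝ (admissibleRadii d R) := by
  rintro p ⟨hp₀, hpd, hpR⟩ q ⟨hq₀, hqd, hqR⟩ a b ha hb hab
  have hcomb (c : ℝ) : a * c + b * c = c := by rw [← add_mul, hab, one_mul]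
  refine ⟨fun i => ?_, fun i j hij => ?_, fun i => ?_⟩ <;>
    simp only [Pi.add_apply, Pi.smul_apply, smul_eq_mul]
  · have := hp₀ i; have := hq₀ i; positivity
  · linarith [mul_le_mul_of_nonneg_left (hpd i j hij) ha,
      mul_le_mul_of_nonneg_left (hqd i j hij) hb, hcomb (d i j)]
  · linarith [mul_le_mul_of_nonneg_left (hpR i) ha, mul_le_mul_of_nonneg_left (hqR i) hb, hcomb R]

lemma isClosed_admissibleRadii : IsClosed (admissibleRadii d R) := by
  simp only [admissibleRadii, ofPred_and, ofPred_forall]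
  exact (isClosed_iInter fun i => isClosed_le continuous_const (continuous_apply i)).inter
    ((isClosed_iInter fun i => isClosed_iInter fun j => isClosed_iInter fun _ =>
      isClosed_le (by fun_prop) continuous_const).inter
    (isClosed_iInter fun i => isClosed_le (continuous_apply i) continuous_const))

lemma isCompact_admissibleRadii [Finite ι] : IsCompact (admissibleRadii d R) :=
  (isCompact_univ_pi fun _ => isCompact_Icc).of_isClosed_subset isClosed_admissibleRadii
    fun _ hr i _ => ⟨hr.1 i, hr.2.2 i⟩

lemma update_mem_admissibleRadii [DecidableEq ι] (hdsymm : ∀ i j, d i j = d j i) {r : ι → ℝ}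
    (hr : r ∈ admissibleRadii d R) {i : ι} {t : ℝ} (hit : r i ≤ t) (htR : t ≤ R)
    (htd : ∀ j, j ≠ i → t + r j ≤ d i j) : Function.update r i t ∈ admissibleRadii d R := by
  obtain ⟨hr₀, hrd, hrR⟩ := hr
  refine ⟨fun k => ?_, fun k l hkl => ?_, fun k => ?_⟩ <;> simp only [Function.update_apply]
  · split_ifs <;> linarith [hr₀ k, hr₀ i]
  · split_ifs with hk hl hl
    · exact absurd (hk.trans hl.symm) hkl
    · subst hk; exact htd l hl
    · subst hl; linarith [htd k hk, hdsymm l k]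
    · exact hrd k l hkl
  · split_ifs <;> linarith [hrR k]

lemma exists_add_eq_of_isMaxOn [Fintype ι] (hdsymm : ∀ i j, d i j = d j i) {g : ℝ → ℝ}
    (hg : StrictMonoOn g (Icc 0 R)) {r : ι → ℝ} (hr : r ∈ admissibleRadii d R)
    (hmax : IsMaxOn (fun r => ∑ i, g (r i)) (admissibleRadii d R) r) {i : ι} (hi : r i < R) :
    ∃ j ≠ i, r i + r j = d i j := by
  classical
  by_contra! hfree
  have hlt : ∀ j, j ≠ i → r i < d i j - r j := fun j hj =>
    lt_sub_iff_add_lt.2 ((hr.2.1 i j hj.symm).lt_of_ne (hfree j hj))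
  have hev : ∀ᶠ t in 𝓝 (r i), t < R ∧ ∀ j, j ≠ i → t < d i j - r j :=
    (eventually_lt_nhds hi).and (eventually_all.2 fun j =>
      eventually_imp_distrib_left.2 fun hj => eventually_lt_nhds (hlt j hj))
  have hev' : ∀ᶠ t in 𝓝[>] (r i), t < R ∧ ∀ j, j ≠ i → t < d i j - r j := nhdsWithin_le_nhds hev
  obtain ⟨t, ⟨htR, htd⟩, hit : r i < t⟩ := (hev'.and self_mem_nhdsWithin).exists
  have hmem := update_mem_admissibleRadii hdsymm hr hit.le htR.le
    fun j hj => (lt_sub_iff_add_lt.1 (htd j hj)).le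
  have hgt : g (r i) < g t := hg ⟨hr.1 i, hr.2.2 i⟩ ⟨(hr.1 i).trans hit.le, htR.le⟩ hit
  refine (isMaxOn_iff.1 hmax _ hmem).not_gt
    (Finset.sum_lt_sum (fun j _ => ?_) ⟨i, Finset.mem_univ i, ?_⟩)
  · rcases eq_or_ne j i with rfl | hj
    · simpa using hgt.le
    · simp [hj]
  · simpa using hgt

lemma exists_sub_eq_neg_of_isMaxOn [Fintype ι] (hdsymm : ∀ i j, d i j = d j i) {g : ℝ → ℝ}
    (hg : StrictMonoOn g (Icc 0 R)) {x y : ι → ℝ} (hx : x ∈ admissibleRadii d R)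
    (hy : y ∈ admissibleRadii d R) {a b : ℝ} (ha : 0 < a) (hb : 0 < b) (hab : a + b = 1)
    (hmax : IsMaxOn (fun r => ∑ i, g (r i)) (admissibleRadii d R) (a • x + b • y)) {i : ι}
    (hi : y i - x i ≠ 0) : ∃ j ≠ i, y j - x j = -(y i - x i) := by
  have hr := convex_admissibleRadii hx hy ha.le hb.le hab
  have hiR : a * x i + b * y i < R := by
    refine (hr.2.2 i).lt_of_ne fun hR => hi ?_
    obtain ⟨hxi, hyi⟩ := eq_of_le_of_le_of_le_add ha hb hab (hx.2.2 i) (hy.2.2 i) hR.ge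
    rw [hxi, hyi, sub_self]
  obtain ⟨j, hji, hj⟩ := exists_add_eq_of_isMaxOn hdsymm hg hr hmax hiR
  obtain ⟨hxij, hyij⟩ := eq_of_le_of_le_of_le_add ha hb hab (hx.2.1 i j hji.symm)
    (hy.2.1 i j hji.symm)
    (hj.ge.trans_eq (by simp only [Pi.add_apply, Pi.smul_apply, smul_eq_mul]; ring))
  exact ⟨j, hji, by linarith⟩

lemma mul_add_mul_le_of_mem_admissibleRadii {h : ℝ} (hh : 0 ≤ h)
    (hdle : ∀ i j, i ≠ j → d i j ≤ (2 - √2) / h) {z : ι → ℝ} (hz : z ∈ admissibleRadii d R)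
    {i j : ι} (hij : i ≠ j) : h * z i + h * z j ≤ 2 - √2 := by
  rcases hh.eq_or_lt with rfl | hpos
  · simp only [zero_mul, add_zero]
    exact two_sub_sqrt_two_nonneg
  calc h * z i + h * z j = h * (z i + z j) := by ring
    _ ≤ h * d i j := mul_le_mul_of_nonneg_left (hz.2.1 i j hij) hh
    _ ≤ 2 - √2 := (le_div_iff₀' hpos).1 (hdle i j hij)

theorem exists_mem_extremePoints_isMaxOn_sum_evaTerm [Fintype ι] {h : ℝ} (hh : 0 ≤ h)
    (hdsymm : ∀ i j, d i j = d j i) (hdnonneg : ∀ i j, i ≠ j → 0 ≤ d i j)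
    (hdle : ∀ i j, i ≠ j → d i j ≤ (2 - √2) / h) :
    ∃ r ∈ (admissibleRadii d (1 / h)).extremePoints ℝ,
      IsMaxOn (fun r => ∑ i, evaTerm h (r i)) (admissibleRadii d (1 / h)) r := by
  refine isCompact_admissibleRadii.exists_mem_extremePoints_isMaxOn
    ⟨0, zero_mem_admissibleRadii hdnonneg (by positivity)⟩
    (Continuous.continuousOn (by unfold evaTerm; fun_prop))
    fun x hx y hy a b ha hb hab hmax => ?_
  have hline : ConvexOn ℝ (Icc 0 1) fun t => ∑ i, evaTerm h (x i + t * (y i - x i)) :=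
    convexOn_sum_evaTerm_line (convex_Icc 0 1)
      (fun t ht i j hij => mul_add_mul_le_of_mem_admissibleRadii hh hdle
        (convex_admissibleRadii.add_smul_sub_mem hx hy ht) hij)
      fun i hi => exists_sub_eq_neg_of_isMaxOn hdsymm (strictMonoOn_evaTerm h) hx hy ha hb hab
        hmax hi
  have := hline.2 (left_mem_Icc.2 zero_le_one) (right_mem_Icc.2 zero_le_one) ha.le hb.le hab
  simp only [smul_eq_mul, mul_zero, mul_one, zero_add, zero_mul, add_zero, one_mul,
    add_sub_cancel] at this
  refine (Finset.sum_congr rfl fun i _ => congrArg (evaTerm h) ?_).trans_le this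
  simp only [Pi.add_apply, Pi.smul_apply, smul_eq_mul]
  linear_combination (x i) * hab

end admissibleRadii

theorem eva_max_at_extreme_point_general (N : ℕ) (h θ : ℝ)
    (hh : 0 ≤ h) (hθ : 0 < θ)
    (d : Fin N → Fin N → ℝ)
    (hdsymm : ∀ i j, d i j = d j i)
    (hdpos : ∀ i j, 0 < d i j)
    (hdle : ∀ i j, d i j ≤ (2 - Real.sqrt 2) / h)
    (D : Set (Fin N → ℝ))
    (hD : D = {r | (∀ i, 0 ≤ r i) ∧ (∀ i j, i ≠ j → r i + r j ≤ d i j) ∧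
      (∀ i, r i ≤ 1 / h)}) :
    ∃ r ∈ Set.extremePoints ℝ D,
      ∀ s ∈ D, ∑ i, θ * Real.pi * Real.exp (-2 * h * s i) * s i ^ 2
        ≤ ∑ i, θ * Real.pi * Real.exp (-2 * h * r i) * r i ^ 2 := by
  subst hD
  obtain ⟨r, hr, hmax⟩ := exists_mem_extremePoints_isMaxOn_sum_evaTerm hh hdsymm
    (fun i j _ => (hdpos i j).le) fun i j _ => hdle i j
  refine ⟨r, hr, fun s hs => ?_⟩
  have := mul_le_mul_of_nonneg_left (isMaxOn_iff.1 hmax s hs) (mul_pos hθ pi_pos).le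
  simpa only [evaTerm, Finset.mul_sum, mul_assoc] using this

/-- Let `D ⊂ ℝᴺ` be the compact convex polytope of admissible radii
`{r : rᵢ ≥ 0, rᵢ + rⱼ ≤ dᵢⱼ (i ≠ j), rᵢ ≤ 1/h}` for symmetric positive bounds `dᵢⱼ`,
and let `eva(r) = Σᵢ θ π e^{−2hrᵢ} rᵢ²`.  If `dᵢⱼ ≤ (2−√2)/h` for all `i, j`, then the
maximum of `eva` over `D` is attained at an extreme point (vertex) of `D`. -/
theorem eva_max_at_extreme_point (N : ℕ) (hN : 1 ≤ N) (h θ : ℝ)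
    (hh : 0 ≤ h) (hθ : 0 < θ)
    (d : Fin N → Fin N → ℝ)
    (hdsymm : ∀ i j, d i j = d j i)
    (hdpos : ∀ i j, 0 < d i j)
    (hdle : ∀ i j, d i j ≤ (2 - Real.sqrt 2) / h)
    (D : Set (Fin N → ℝ))
    (hD : D = {r | (∀ i, 0 ≤ r i) ∧ (∀ i j, i ≠ j → r i + r j ≤ d i j) ∧
      (∀ i, r i ≤ 1 / h)}) :
    ∃ r ∈ Set.extremePoints ℝ D,
      ∀ s ∈ D, ∑ i, θ * Real.pi * Real.exp (-2 * h * s i) * s i ^ 2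
        ≤ ∑ i, θ * Real.pi * Real.exp (-2 * h * r i) * r i ^ 2 :=
  eva_max_at_extreme_point_general N h θ hh hθ d hdsymm hdpos hdle D hD
end
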